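/- Let μ, ν be compactly supported measured laminations on a finite-area hyperbolic surface S modeled as nonnegative functionals on measured laminations via the intersection pairing. Suppose that for every nonzero compactly supported measured lamination λ, i(λ,μ) + i(λ,ν) > 0. Then for every C > 0, the set of hyperbolic structures g on S with length_g(μ) ≤ C and length_g(ν) ≤ C is compact in Teichmüller space. -/

import Mathlib

open Filter

/-- **Binding confinement.**
Let `T = Teich(S)` be the Teichmüller space of a finite-area hyperbolic
surface, `ML` the space of compactly supported measured laminations (with
zero lamination `0`), `i` the geometric intersection pairing and `length` the
length pairing.  Assume Thurston's compactification property: any sequence in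
`T` with no convergent subsequence has a subsequence converging projectively
to some nonzero `μ' ∈ ML`, in the sense that ratios of lengths converge to
ratios of intersection numbers with `μ'` and lengths of laminations meeting
`μ'` blow up.  If `μ, ν ∈ ML` bind the surface — `i(λ,μ) + i(λ,ν) > 0` for
every nonzero `λ ∈ ML` — then for every `C > 0` the set of hyperbolic
structures `g` with `length_g(μ) ≤ C` and `length_g(ν) ≤ C` is compact. -/
theorem binding_confinement
    {T ML : Type*} [MetricSpace T] [Zero ML]
    (i : ML → ML → ℝ) (length : T → ML → ℝ)
    (hinonneg : ∀ a b : ML, 0 ≤ i a b)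
    (hisymm : ∀ a b : ML, i a b = i b a)
    (hlennonneg : ∀ (g : T) (m : ML), 0 ≤ length g m)
    (hlencont : ∀ m : ML, Continuous fun g : T => length g m)
    (hthurston : ∀ g : ℕ → T,
      (¬ ∃ (φ : ℕ → ℕ) (t : T), StrictMono φ ∧
          Tendsto (fun n => g (φ n)) atTop (nhds t)) →
      ∃ (φ : ℕ → ℕ) (μ' : ML), StrictMono φ ∧ μ' ≠ 0 ∧
        (∀ lam lam₀ : ML, i μ' lam₀ ≠ 0 →
          Tendsto (fun n =>
              length (g (φ n)) lam / length (g (φ n)) lam₀) atTop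
            (nhds (i μ' lam / i μ' lam₀))) ∧
        (∀ lam₀ : ML, i μ' lam₀ ≠ 0 →
          Tendsto (fun n => length (g (φ n)) lam₀) atTop atTop))
    (μ ν : ML)
    (hbind : ∀ lam : ML, lam ≠ 0 → 0 < i lam μ + i lam ν)
    (C : ℝ) (hC : 0 < C) :
    IsCompact {g : T | length g μ ≤ C ∧ length g ν ≤ C} := by
  rw [isCompact_iff_isSeqCompact]
  intro g hg
  have hconv : ∃ (φ : ℕ → ℕ) (t : T), StrictMono φ ∧
      Tendsto (fun n => g (φ n)) atTop (nhds t) := by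
    by_contra hno
    obtain ⟨φ, μ', hφ, hμ'0, _, hblow⟩ := hthurston g hno
    have hsum : 0 < i μ' μ + i μ' ν := hbind μ' hμ'0
    rcases lt_or_ge 0 (i μ' μ) with hpos | hle
    · have := hblow μ (ne_of_gt hpos)
      obtain ⟨n, hn⟩ := (this.eventually_gt_atTop C).exists
      exact absurd (hg (φ n)).1 (not_le.mpr hn)
    · have hν : 0 < i μ' ν := by
        have := hinonneg μ' μ; linarith
      have := hblow ν (ne_of_gt hν)
      obtain ⟨n, hn⟩ := (this.eventually_gt_atTop C).exists
      exact absurd (hg (φ n)).2 (not_le.mpr hn)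
  obtain ⟨φ, t, hφ, ht⟩ := hconv
  refine ⟨t, ⟨?_, ?_⟩, φ, hφ, ht⟩
  · exact le_of_tendsto (((hlencont μ).continuousAt).tendsto.comp ht)
      (Eventually.of_forall fun n => (hg (φ n)).1)
  · exact le_of_tendsto (((hlencont ν).continuousAt).tendsto.comp ht)
      (Eventually.of_forall fun n => (hg (φ n)).2)
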